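/- Let m and m̄ be 3×3 real matrices related by dev sym m = −dev sym m̄, skew m = skew m̄, and tr m = (1/2)·tr m̄ (the correspondence between the dislocation-format and classical-format Cosserat moment stress tensors). Then for every angle φ ∈ ℝ, with e_r = (cos φ, sin φ, 0), e_φ = (−sin φ, cos φ, 0), e_z = (0,0,1), one has ⟨skew(m × e_z)·e_φ, e_r⟩ − ⟨skew(m × e_z)·e_r, e_φ⟩ = −⟨m̄·e_z, e_z⟩ = −m̄₃₃. -/

import Mathlib

/-!
Because `e_r ∧ e_φ = e_x ∧ e_y`, the antisymmetrised form `⟨S e_φ, e_r⟩ - ⟨S e_r, e_φ⟩` equals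
`S₁₂ - S₂₁` for every matrix `S`; for `S = skew (m × e_z)` this is `-(m₁₁ + m₂₂)`. On the diagonal,
the Cosserat correspondence gives `mᵢᵢ + m̄ᵢᵢ = tr m`, hence `m₁₁ + m₂₂ = tr m - m₃₃ = m̄₃₃`.
Indices here are 1-based, as in the paper; in the code `S₁₂` is `S 0 1`.
-/

open Matrix Real

noncomputable section

abbrev Mat3 := Matrix (Fin 3) (Fin 3) ℝ

def symm3 (P : Mat3) : Mat3 := (1/2 : ℝ) • (P + Pᵀ)

def skew3 (P : Mat3) : Mat3 := (1/2 : ℝ) • (P - Pᵀ)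

def dev3 (P : Mat3) : Mat3 := P - (Matrix.trace P / 3) • (1 : Mat3)

def cross3v (v w : Fin 3 → ℝ) : Fin 3 → ℝ :=
  ![v 1 * w 2 - v 2 * w 1, v 2 * w 0 - v 0 * w 2, v 0 * w 1 - v 1 * w 0]

def crossMat (m : Mat3) (b : Fin 3 → ℝ) : Mat3 :=
  Matrix.of fun i => cross3v (fun j => m i j) b

def eR (φ : ℝ) : Fin 3 → ℝ := ![Real.cos φ, Real.sin φ, 0]

def ePhi (φ : ℝ) : Fin 3 → ℝ := ![-Real.sin φ, Real.cos φ, 0]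

def eZ : Fin 3 → ℝ := ![0, 0, 1]

theorem mulVec_ePhi_dotProduct_eR_sub (S : Mat3) (φ : ℝ) :
    (S *ᵥ ePhi φ) ⬝ᵥ eR φ - (S *ᵥ eR φ) ⬝ᵥ ePhi φ = S 0 1 - S 1 0 := by
  simp only [eR, ePhi, mulVec, dotProduct, Fin.sum_univ_three, cons_val_zero, cons_val_one,
    cons_val_two, Nat.succ_eq_add_one, Nat.reduceAdd, tail_cons, head_cons]
  linear_combination (S 0 1 - S 1 0) * sin_sq_add_cos_sq φ

theorem mulVec_eZ_dotProduct_eZ (A : Mat3) : (A *ᵥ eZ) ⬝ᵥ eZ = A 2 2 := by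
  simp [eZ, mulVec, dotProduct, Fin.sum_univ_three]

theorem skew3_apply_sub_apply (P : Mat3) (i j : Fin 3) :
    skew3 P i j - skew3 P j i = P i j - P j i := by
  simp only [skew3, Matrix.smul_apply, Matrix.sub_apply, transpose_apply, smul_eq_mul]
  ring

theorem crossMat_eZ_apply_sub_apply (m : Mat3) :
    crossMat m eZ 0 1 - crossMat m eZ 1 0 = -(m 0 0 + m 1 1) := by
  simp [crossMat, cross3v, eZ]
  ring

theorem trace_symm3 (P : Mat3) : trace (symm3 P) = trace P := by
  simp only [symm3, trace_smul, trace_add, trace_transpose, smul_eq_mul]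
  ring

theorem dev3_symm3_apply_self (P : Mat3) (i : Fin 3) :
    dev3 (symm3 P) i i = P i i - trace P / 3 := by
  rw [dev3, trace_symm3]
  simp only [symm3, Matrix.sub_apply, Matrix.smul_apply, Matrix.add_apply, transpose_apply,
    one_apply_eq, smul_eq_mul]
  ring

theorem apply_self_add_apply_self_of_cosserat {m mbar : Mat3}
    (hdev : dev3 (symm3 m) = -dev3 (symm3 mbar)) (htr : trace m = (1/2 : ℝ) * trace mbar)
    (i : Fin 3) : m i i + mbar i i = trace m := by
  have hii := congrFun (congrFun hdev i) i
  rw [neg_apply, dev3_symm3_apply_self, dev3_symm3_apply_self] at hii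
  linear_combination hii - (2/3 : ℝ) * htr

theorem torque_density_classical_format_general (m mbar : Mat3)
    (hdev : dev3 (symm3 m) = -dev3 (symm3 mbar))
    (htr : Matrix.trace m = (1/2 : ℝ) * Matrix.trace mbar) :
    ∀ φ : ℝ,
      (skew3 (crossMat m eZ) *ᵥ ePhi φ) ⬝ᵥ eR φ
          - (skew3 (crossMat m eZ) *ᵥ eR φ) ⬝ᵥ ePhi φ
        = -((mbar *ᵥ eZ) ⬝ᵥ eZ) ∧
      (mbar *ᵥ eZ) ⬝ᵥ eZ = mbar 2 2 := by
  intro φ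
  have hmbar : m 0 0 + m 1 1 = mbar 2 2 := by
    have h22 := apply_self_add_apply_self_of_cosserat hdev htr 2
    rw [trace_fin_three] at h22
    linarith
  refine ⟨?_, mulVec_eZ_dotProduct_eZ mbar⟩
  rw [mulVec_ePhi_dotProduct_eR_sub, skew3_apply_sub_apply, crossMat_eZ_apply_sub_apply,
    mulVec_eZ_dotProduct_eZ, hmbar]

/-- the higher-order torque density in dislocation format equals −m̄₃₃ in the
classical format, for moment tensors related by the Cosserat correspondence. -/
theorem torque_density_classical_format (m mbar : Mat3)
    (hdev : dev3 (symm3 m) = -dev3 (symm3 mbar))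
    (hskew : skew3 m = skew3 mbar)
    (htr : Matrix.trace m = (1/2 : ℝ) * Matrix.trace mbar) :
    ∀ φ : ℝ,
      (skew3 (crossMat m eZ) *ᵥ ePhi φ) ⬝ᵥ eR φ
          - (skew3 (crossMat m eZ) *ᵥ eR φ) ⬝ᵥ ePhi φ
        = -((mbar *ᵥ eZ) ⬝ᵥ eZ) ∧
      (mbar *ᵥ eZ) ⬝ᵥ eZ = mbar 2 2 :=
  torque_density_classical_format_general m mbar hdev htr
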